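/- Consider a market with n unit-demand buyers and n items in which every optimal allocation allocates all items, giving each buyer exactly one item. Then every legal allocation — an allocation in which each buyer i receives a single item that is allocated to i in some optimal allocation, and all items are allocated — is itself optimal. -/

import Mathlib

open Finset

section Defs

variable {M : Type*} [Fintype M] [DecidableEq M] {ι : Type*} [Fintype ι]

/-- A valuation is monotone. -/
def MonotoneVal (v : Finset M → ℝ) : Prop :=
  ∀ ⦃S T : Finset M⦄, S ⊆ T → v S ≤ v T

/-- Quasi-linear utility of a bundle `S` at prices `p`. -/
def util (v : Finset M → ℝ) (p : M → ℝ) (S : Finset M) : ℝ :=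
  v S - ∑ x ∈ S, p x

/-- `S` is a utility-maximizing bundle for valuation `v` at prices `p`. -/
def InDemand (v : Finset M → ℝ) (p : M → ℝ) (S : Finset M) : Prop :=
  ∀ T : Finset M, util v p T ≤ util v p S

/-- Gross-substitutes valuation. -/
def GrossSubstitutes (v : Finset M → ℝ) : Prop :=
  ∀ p q : M → ℝ, (∀ x, 0 ≤ p x) → (∀ x, 0 ≤ q x) → (∀ x, p x ≤ q x) →
    ∀ A : Finset M, InDemand v p A →
      ∃ B : Finset M, InDemand v q B ∧ ∀ x ∈ A, p x = q x → x ∈ B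

/-- `v` is a `k`-demand (multi-demand) valuation:
`v S` is the maximum of `∑_{x ∈ T} v {x}` over `T ⊆ S` with `|T| ≤ k`. -/
def MultiDemand (v : Finset M → ℝ) (k : ℕ) : Prop :=
  ∀ S : Finset M,
    IsGreatest {t : ℝ | ∃ T ⊆ S, T.card ≤ k ∧ t = ∑ x ∈ T, v {x}} (v S)

/-- `v` is a unit-demand valuation: `v ∅ = 0` and `v S = max_{x ∈ S} v {x}`. -/
def UnitDemand (v : Finset M → ℝ) : Prop :=
  v ∅ = 0 ∧ ∀ S : Finset M, S.Nonempty →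
    IsGreatest {t : ℝ | ∃ x ∈ S, t = v {x}} (v S)

/-- An allocation: a family of pairwise disjoint bundles. -/
def IsAlloc (A : ι → Finset M) : Prop :=
  ∀ i j : ι, i ≠ j → Disjoint (A i) (A j)

/-- Social welfare of an allocation. -/
def SW (v : ι → Finset M → ℝ) (A : ι → Finset M) : ℝ :=
  ∑ i, v i (A i)

/-- An optimal allocation: it maximizes social welfare among allocations. -/
def IsOptimalAlloc (v : ι → Finset M → ℝ) (A : ι → Finset M) : Prop :=
  IsAlloc A ∧ ∀ B : ι → Finset M, IsAlloc B → SW v B ≤ SW v A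

/-- `p` is an optimal dynamic pricing: every demanded bundle of every buyer is
her bundle in some optimal allocation. -/
def IsDynamicPricing (v : ι → Finset M → ℝ) (p : M → ℝ) : Prop :=
  (∀ x, 0 ≤ p x) ∧
  ∀ (i : ι) (S : Finset M), InDemand (v i) p S →
    ∃ A : ι → Finset M, IsOptimalAlloc v A ∧ A i = S

/-- Walrasian equilibrium: every buyer gets a demanded bundle and unallocated
items have price 0. -/
def IsWalrasianEq (v : ι → Finset M → ℝ) (A : ι → Finset M) (p : M → ℝ) : Prop :=
  (∀ x, 0 ≤ p x) ∧ IsAlloc A ∧ (∀ i, InDemand (v i) p (A i)) ∧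
  ∀ x : M, (∀ i, x ∉ A i) → p x = 0

/-- Item `x` is legal for buyer `i`: some optimal allocation gives `x` to `i`. -/
def LegalItem (v : ι → Finset M → ℝ) (i : ι) (x : M) : Prop :=
  ∃ A : ι → Finset M, IsOptimalAlloc v A ∧ x ∈ A i

/-- A bundle `S` is legal for buyer `i`: `|S| = k i` and every item of `S` is legal for `i`. -/
def LegalBundle (v : ι → Finset M → ℝ) (k : ι → ℕ) (i : ι) (S : Finset M) : Prop :=
  S.card = k i ∧ ∀ x ∈ S, LegalItem v i x

/-- A legal allocation: every buyer's bundle is legal for her. -/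
def LegalAlloc (v : ι → Finset M → ℝ) (k : ι → ℕ) (A : ι → Finset M) : Prop :=
  IsAlloc A ∧ ∀ i, LegalBundle v k i (A i)

/-- Submodularity condition (SM). -/
def SMcond (v : Finset M → ℝ) : Prop :=
  ∀ (x y : M) (S : Finset M), x ≠ y → x ∉ S → y ∉ S →
    v S + v (S ∪ {x, y}) ≤ v (S ∪ {x}) + v (S ∪ {y})

/-- Condition (RGP). -/
def RGPcond (v : Finset M → ℝ) : Prop :=
  ∀ (x y z : M) (S : Finset M), x ≠ y → x ≠ z → y ≠ z → x ∉ S → y ∉ S → z ∉ S →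
    v (S ∪ {x}) + v (S ∪ {y, z}) ≤
      max (v (S ∪ {y}) + v (S ∪ {x, z})) (v (S ∪ {z}) + v (S ∪ {x, y}))

/-- Condition (NP-SM) with nonnegative prices. -/
def NPSM (v : Finset M → ℝ) : Prop :=
  ¬ ∃ (p : M → ℝ) (x y : M) (S : Finset M),
      (∀ a, 0 ≤ p a) ∧ x ≠ y ∧ x ∉ S ∧ y ∉ S ∧ 0 < p x ∧ 0 < p y ∧
      InDemand v p S ∧ InDemand v p (S ∪ {x, y}) ∧
      ∀ C : Finset M, InDemand v p C → (C ⊆ S ∨ ∃ T ⊆ S, C = T ∪ {x, y})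

/-- Condition (NP-RGP) with nonnegative prices. -/
def NPRGP (v : Finset M → ℝ) : Prop :=
  ¬ ∃ (p : M → ℝ) (x y z : M) (S : Finset M),
      (∀ a, 0 ≤ p a) ∧ x ≠ y ∧ x ≠ z ∧ y ≠ z ∧ x ∉ S ∧ y ∉ S ∧ z ∉ S ∧
      0 < p x ∧ 0 < p y ∧ 0 < p z ∧
      InDemand v p (S ∪ {x}) ∧ InDemand v p (S ∪ {y, z}) ∧
      ∀ C : Finset M, InDemand v p C →
        ((∃ T ⊆ S, C = T ∪ {x}) ∨ ∃ T ⊆ S, C = T ∪ {y, z})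

end Defs

/-! Identify single-item allocations with permutations, so that welfare becomes the weight
`∑ i, w i (τ i)` of an assignment. Summing the permutation matrices of all `N` optimal
assignments gives a matrix whose weight is `N · OPT`; legality of `σ` means this sum dominates
the permutation matrix of `σ` entrywise, and the remainder is `N - 1` times a doubly stochastic
matrix. By Birkhoff's theorem the remainder has weight at most `(N - 1) · OPT`, so `σ` has
weight at least `OPT`. -/

open Matrix Equiv

section Assignment

variable {ι : Type*} [Fintype ι] [DecidableEq ι]

def permWeight (w : ι → ι → ℝ) (τ : Perm ι) : ℝ :=
  ∑ i, w i (τ i)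

noncomputable def matrixWeight (w : ι → ι → ℝ) : Matrix ι ι ℝ →ₗ[ℝ] ℝ :=
  ∑ i, ∑ j, w i j • entryLinearMap ℝ ℝ i j

lemma matrixWeight_permMatrix (w : ι → ι → ℝ) (τ : Perm ι) :
    matrixWeight w (τ.permMatrix ℝ) = permWeight w τ := by
  simp [matrixWeight, permWeight]

lemma matrixWeight_le_of_mem_doublyStochastic {w : ι → ι → ℝ} {c : ℝ}
    (h : ∀ τ, permWeight w τ ≤ c) {X : Matrix ι ι ℝ} (hX : X ∈ doublyStochastic ℝ ι) :
    matrixWeight w X ≤ c := by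
  rw [← SetLike.mem_coe, doublyStochastic_eq_convexHull_permMatrix] at hX
  refine convexHull_min ?_ (convex_halfSpace_le (matrixWeight w).isLinear c) hX
  rintro _ ⟨τ, rfl⟩
  simpa [matrixWeight_permMatrix] using h τ

lemma exists_sum_permMatrix_eq_add_smul {F : Finset (Perm ι)} (hF : F.Nonempty)
    {σ : Perm ι} (hσ : ∀ i, ∃ τ ∈ F, τ i = σ i) :
    ∃ Z ∈ doublyStochastic ℝ ι,
      ∑ τ ∈ F, τ.permMatrix ℝ = σ.permMatrix ℝ + ((#F : ℝ) - 1) • Z := by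
  have hs : (0 : ℝ) ≤ #F - 1 := by
    simpa using (Nat.one_le_cast (α := ℝ)).2 hF.card_pos
  have hentry : ∀ i j, σ.permMatrix ℝ i j ≤ ∑ τ ∈ F, τ.permMatrix ℝ i j := by
    intro i j
    obtain ⟨τ, hτF, hτi⟩ := hσ i
    have hle := single_le_sum (f := fun τ : Perm ι => τ.permMatrix ℝ i j)
      (fun τ _ => nonneg_of_mem_doublyStochastic permMatrix_mem_doublyStochastic) hτF
    simpa [hτi] using hle
  have hrow : ∀ i, ∑ j, (∑ τ ∈ F, τ.permMatrix ℝ - σ.permMatrix ℝ) i j = #F - 1 := by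
    intro i
    simp only [Matrix.sub_apply, Matrix.sum_apply, sum_sub_distrib]
    rw [sum_comm, sum_row_of_mem_doublyStochastic permMatrix_mem_doublyStochastic i,
      sum_congr rfl fun τ _ => sum_row_of_mem_doublyStochastic permMatrix_mem_doublyStochastic i]
    simp
  have hcol : ∀ j, ∑ i, (∑ τ ∈ F, τ.permMatrix ℝ - σ.permMatrix ℝ) i j = #F - 1 := by
    intro j
    simp only [Matrix.sub_apply, Matrix.sum_apply, sum_sub_distrib]
    rw [sum_comm, sum_col_of_mem_doublyStochastic permMatrix_mem_doublyStochastic j,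
      sum_congr rfl fun τ _ => sum_col_of_mem_doublyStochastic permMatrix_mem_doublyStochastic j]
    simp
  obtain ⟨Z, hZ, hdiff⟩ := (exists_mem_doublyStochastic_eq_smul_iff hs).2
    ⟨fun i j => by simpa [Matrix.sum_apply] using hentry i j, hrow, hcol⟩
  exact ⟨Z, hZ, by rw [← hdiff]; abel⟩

theorem permWeight_le_of_forall_exists_max {w : ι → ι → ℝ} {σ : Perm ι}
    (hσ : ∀ i, ∃ τ, (∀ ρ, permWeight w ρ ≤ permWeight w τ) ∧ τ i = σ i) (ρ : Perm ι) :
    permWeight w ρ ≤ permWeight w σ := by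
  obtain ⟨τ₀, hτ₀⟩ := Finite.exists_max (permWeight w)
  set c := permWeight w τ₀
  set F := univ.filter fun τ => permWeight w τ = c
  have hτ₀F : τ₀ ∈ F := by simp [F, c]
  have hF : ∀ i, ∃ τ ∈ F, τ i = σ i := fun i =>
    let ⟨τ, hmax, hτi⟩ := hσ i
    ⟨τ, mem_filter.2 ⟨mem_univ _, le_antisymm (hτ₀ τ) (hmax τ₀)⟩, hτi⟩
  obtain ⟨Z, hZ, hsum⟩ := exists_sum_permMatrix_eq_add_smul ⟨τ₀, hτ₀F⟩ hF
  have hZc : matrixWeight w Z ≤ c := matrixWeight_le_of_mem_doublyStochastic hτ₀ hZ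
  have hN : (1 : ℝ) ≤ #F := Nat.one_le_cast.2 (card_pos.2 ⟨τ₀, hτ₀F⟩)
  have hweight : #F * c = permWeight w σ + (#F - 1) * matrixWeight w Z := by
    apply_fun matrixWeight w at hsum
    rw [map_sum, map_add, map_smul, smul_eq_mul, matrixWeight_permMatrix,
      sum_congr rfl fun τ hτ => (matrixWeight_permMatrix w τ).trans (mem_filter.1 hτ).2] at hsum
    simpa using hsum
  have hc : c ≤ permWeight w σ := by nlinarith
  exact (hτ₀ ρ).trans hc

end Assignment

section Market

variable {M ι : Type*}

def permAlloc (e : M ≃ ι) (τ : Perm ι) : ι → Finset M :=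
  fun i => {e.symm (τ i)}

lemma isAlloc_permAlloc (e : M ≃ ι) (τ : Perm ι) : IsAlloc (permAlloc e τ) := by
  intro i j hij
  simpa [permAlloc] using hij

lemma exists_eq_permAlloc [Finite ι] {B : ι → Finset M} (e : M ≃ ι) (hB : IsAlloc B)
    (hcard : ∀ i, (B i).card = 1) : ∃ τ : Perm ι, B = permAlloc e τ := by
  choose b hb using fun i => card_eq_one.1 (hcard i)
  have hinj : Function.Injective (e ∘ b) := fun i j hij => by
    by_contra hne
    simpa [hb, e.injective hij] using hB i j hne
  refine ⟨Equiv.ofBijective _ hinj.bijective_of_finite, funext fun i => ?_⟩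
  simp [permAlloc, hb]

lemma exists_isOptimalAlloc [Fintype M] [Fintype ι] [DecidableEq ι] (v : ι → Finset M → ℝ) :
    ∃ A, IsOptimalAlloc v A := by
  classical
  obtain ⟨A, hA, hmax⟩ := (univ.filter fun B : ι → Finset M => IsAlloc B).exists_max_image (SW v)
    ⟨fun _ => ∅, mem_filter.2 ⟨mem_univ _, fun _ _ _ => disjoint_bot_left⟩⟩
  exact ⟨A, (mem_filter.1 hA).2, fun B hB => hmax B (by simpa using hB)⟩

end Market

theorem unit_demand_legal_is_optimal_general
    {M : Type*} [Fintype M] {n : ℕ}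
    (v : Fin n → Finset M → ℝ)
    (hcard : Fintype.card M = n)
    (hopt : ∀ A : Fin n → Finset M, IsOptimalAlloc v A →
      (∀ x : M, ∃ i, x ∈ A i) ∧ ∀ i, (A i).card = 1)
    (A : Fin n → Finset M) (hA : IsAlloc A)
    (hAcard : ∀ i, (A i).card = 1)
    (hAleg : ∀ i, ∀ x ∈ A i, LegalItem v i x) :
    IsOptimalAlloc v A := by
  let e : M ≃ Fin n := Fintype.equivFinOfCardEq hcard
  let w : Fin n → Fin n → ℝ := fun i j => v i {e.symm j}
  have hopt_perm : ∀ C, IsOptimalAlloc v C →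
      ∃ τ, C = permAlloc e τ ∧ ∀ ρ, permWeight w ρ ≤ permWeight w τ := by
    intro C hC
    obtain ⟨τ, rfl⟩ := exists_eq_permAlloc e hC.1 (hopt C hC).2
    exact ⟨τ, rfl, fun ρ => hC.2 _ (isAlloc_permAlloc e ρ)⟩
  obtain ⟨σ, rfl⟩ := exists_eq_permAlloc e hA hAcard
  have hσ : ∀ ρ, permWeight w ρ ≤ permWeight w σ := by
    refine permWeight_le_of_forall_exists_max fun i => ?_
    obtain ⟨C, hC, hiC⟩ := hAleg i _ (mem_singleton_self _)
    obtain ⟨τ, rfl, hτ⟩ := hopt_perm C hC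
    exact ⟨τ, hτ, by simpa [permAlloc, eq_comm] using hiC⟩
  obtain ⟨C, hC⟩ := exists_isOptimalAlloc v
  obtain ⟨τ, rfl, -⟩ := hopt_perm C hC
  exact ⟨hA, fun B hB => (hC.2 B hB).trans (hσ τ)⟩

/-- In a unit-demand market with `n` buyers and `n` items where
every optimal allocation allocates all items, one per buyer, every legal
allocation is optimal. -/
theorem unit_demand_legal_is_optimal
    {M : Type*} [Fintype M] [DecidableEq M] {n : ℕ}
    (v : Fin n → Finset M → ℝ)
    (hmono : ∀ i, MonotoneVal (v i)) (hud : ∀ i, UnitDemand (v i))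
    (hcard : Fintype.card M = n)
    (hopt : ∀ A : Fin n → Finset M, IsOptimalAlloc v A →
      (∀ x : M, ∃ i, x ∈ A i) ∧ ∀ i, (A i).card = 1)
    (A : Fin n → Finset M) (hA : IsAlloc A)
    (hAcard : ∀ i, (A i).card = 1)
    (hAleg : ∀ i, ∀ x ∈ A i, LegalItem v i x)
    (hAall : ∀ x : M, ∃ i, x ∈ A i) :
    IsOptimalAlloc v A :=
  unit_demand_legal_is_optimal_general v hcard hopt A hA hAcard hAleg
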